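/- The set of parameters a ∈ ℂ for which the projective curve {P − aQ = 0} is singular is finite; that is, { a ∈ ℂ : there exists (x,y,z) ∈ ℂ³ \ {0} at which P − aQ and all three of its partial derivatives vanish } is a finite set. In particular, for all but finitely many a ∈ ℂ the curve {P − aQ = 0} ⊂ ℙ² is smooth. -/

import Mathlib

/-!
Expanding, `R_k(x,y,z) = z k² - (x - y + (2d+1) z) k + (2d+1) x`, so all the lines `R_k` are
tangent to one conic and, for `z ≠ 0`, `R_k = z (u - k) (v - k)` where `u, v` are the roots of this
quadratic in `k`. Hence `P = z^(d+1) n(u) n(v)` and `Q = z^(d+1) q(u) q(v)` with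
`n = ∏_{k ≤ d} (T - k)` and `q = ∏_{d < k ≤ 2d+1} (T - k)`. Moving the point so that only `u`
(resp. only `v`) varies shows that at a singular point of `P - aQ` with `a ≠ 0` both `u` and `v`
are critical points of `n / q`, i.e. roots of the Wronskian `W(q, n)`, and `a = (n/q)(u) (n/q)(v)`.
On the line `z = 0` the same argument with a single root gives `a = (n/q)(u)`, except at
`(1 : 1 : 0)`, which lies on the curve only for `a = 1`. As `W(q, n)` does not vanish at `d + 1`,
only finitely many `a` occur.
-/

open MvPolynomial

/-- The linear form `R_k = (2d+1-k)x + ky - k(2d+1-k)z` in `ℂ[x,y,z]`. -/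
noncomputable def R3 (d k : ℕ) : MvPolynomial (Fin 3) ℂ :=
  C (2*(d:ℂ)+1-(k:ℂ)) * X 0 + C (k:ℂ) * X 1 - C ((k:ℂ)*(2*(d:ℂ)+1-(k:ℂ))) * X 2

/-- `P = ∏_{k=0}^{d} R_k`. -/
noncomputable def P3 (d : ℕ) : MvPolynomial (Fin 3) ℂ :=
  ∏ k ∈ Finset.range (d+1), R3 d k

/-- `Q = ∏_{k=d+1}^{2d+1} R_k`. -/
noncomputable def Q3 (d : ℕ) : MvPolynomial (Fin 3) ℂ :=
  ∏ k ∈ Finset.Icc (d+1) (2*d+1), R3 d k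

open scoped Pointwise Polynomial

theorem MvPolynomial.hasDerivAt_eval_add_smul {𝕜 σ : Type*} [NontriviallyNormedField 𝕜]
    [Fintype σ] (E : MvPolynomial σ 𝕜) (p w : σ → 𝕜) (t : 𝕜) :
    HasDerivAt (fun s => eval (p + s • w) E) (∑ i, w i * eval (p + t • w) (pderiv i E)) t := by
  classical
  induction E using MvPolynomial.induction_on with
  | C c => simpa using hasDerivAt_const t c
  | add f g hf hg =>
    simp only [map_add, mul_add, Finset.sum_add_distrib]
    exact hf.add hg
  | mul_X f j hf =>
    set q := p + t • w
    have hj : HasDerivAt (fun s => p j + s * w j) (w j) t := by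
      simpa using ((hasDerivAt_id t).mul_const (w j)).const_add (p j)
    have hX : ∑ i, w i * eval q (pderiv i (X j : MvPolynomial σ 𝕜)) = w j := by
      simp [pderiv_X, Pi.single_apply]
    have hmul : ∀ i, w i * eval q (pderiv i (f * X j)) = w i * eval q (pderiv i f) * q j
        + eval q f * (w i * eval q (pderiv i (X j))) := by
      intro i
      simp only [pderiv_mul, map_add, map_mul, eval_X]
      ring
    simp only [map_mul, eval_X, Pi.add_apply, Pi.smul_apply, smul_eq_mul]
    refine (hf.mul hj).congr_deriv ?_
    rw [Finset.sum_congr rfl fun i _ => hmul i, Finset.sum_add_distrib, ← Finset.sum_mul,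
      ← Finset.mul_sum, hX]
    rfl

theorem MvPolynomial.eval_derivative_eq_zero_of_eval_line {𝕜 σ : Type*}
    [NontriviallyNormedField 𝕜] [Fintype σ] {E : MvPolynomial σ 𝕜} {p : σ → 𝕜}
    (hE : ∀ i, eval p (pderiv i E) = 0) (w : σ → 𝕜) {G : 𝕜[X]} {c u : 𝕜} (hc : c ≠ 0)
    (hline : ∀ t, eval (p + t • w) E = c * G.eval (u + t)) :
    G.derivative.eval u = 0 := by
  have hE' := E.hasDerivAt_eval_add_smul p w 0
  simp only [zero_smul, add_zero, hE, mul_zero, Finset.sum_const_zero, hline] at hE'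
  have hG : HasDerivAt (fun t => c * G.eval (u + t)) (c * G.derivative.eval u) 0 := by
    simpa using ((G.hasDerivAt (u + 0)).comp_const_add u 0).const_mul c
  exact (mul_eq_zero.1 (hG.unique hE')).resolve_left hc

theorem IsAlgClosed.exists_mul_add_eq_and_mul_mul_eq {K : Type*} [Field K] [IsAlgClosed K]
    {a b c : K} (ha : a ≠ 0) : ∃ u v, a * (u + v) = b ∧ a * (u * v) = c := by
  obtain ⟨u, hu⟩ := exists_root
    (Polynomial.C a * Polynomial.X ^ 2 + Polynomial.C (-b) * Polynomial.X + Polynomial.C c)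
    (by rw [Polynomial.degree_quadratic ha]; decide)
  simp only [Polynomial.IsRoot.def, Polynomial.eval_add, Polynomial.eval_mul, Polynomial.eval_C,
    Polynomial.eval_pow, Polynomial.eval_X] at hu
  refine ⟨u, b / a - u, by field_simp; ring, ?_⟩
  field_simp
  linear_combination -hu

namespace Lagrange

variable {F ι : Type*} [Field F] {s : Finset ι} {v : ι → F} {x : F}

theorem eval_nodal_eq_zero_iff : (nodal s v).eval x = 0 ↔ ∃ i ∈ s, x = v i := by
  simp [eval_nodal, Finset.prod_eq_zero_iff, sub_eq_zero]

theorem eval_derivative_nodal_ne_zero (hvs : Set.InjOn v s) (hx : (nodal s v).eval x = 0) :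
    (Polynomial.derivative (nodal s v)).eval x ≠ 0 := by
  classical
  obtain ⟨i, hi, rfl⟩ := eval_nodal_eq_zero_iff.1 hx
  simpa [nodalWeight_eq_eval_derivative_nodal hi] using nodalWeight_ne_zero hvs hi

end Lagrange

namespace Polynomial

section Pencil

variable {K : Type*} [Field K] {n q : K[X]} {a u v : K}

/-- The roots of the Wronskian are the critical points of `n / q`, as `(n / q)' = W(q, n) / q²`. -/
def criticalValues (n q : K[X]) : Set K :=
  (fun w => n.eval w / q.eval w) '' {w | (wronskian q n).IsRoot w}

theorem criticalValues_finite (h : wronskian q n ≠ 0) : (criticalValues n q).Finite :=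
  (finite_setOfPred_isRoot h).image _

theorem wronskian_ne_zero_of_eval {w : K} (hq : q.eval w = 0) (hq' : q.derivative.eval w ≠ 0)
    (hn : n.eval w ≠ 0) : wronskian q n ≠ 0 := by
  intro h
  have := congrArg (eval w) h
  simp only [wronskian, eval_sub, eval_mul, hq, zero_mul, zero_sub, neg_eq_zero, eval_zero] at this
  exact mul_ne_zero hq' hn this

theorem eval_wronskian_eq_zero_of_pencil {c₁ c₂ : K} (hc : c₁ ≠ 0)
    (h : n.eval u * c₁ = a * (q.eval u * c₂))
    (h' : n.derivative.eval u * c₁ = a * (q.derivative.eval u * c₂)) :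
    (wronskian q n).eval u = 0 := by
  have : c₁ * (wronskian q n).eval u = 0 := by
    simp only [wronskian, eval_sub, eval_mul]
    linear_combination q.eval u * h' - q.derivative.eval u * h
  exact (mul_eq_zero.1 this).resolve_left hc

theorem mem_criticalValues_of_pencil (hdisj : ∀ w, n.eval w = 0 → q.eval w ≠ 0)
    (h : n.eval u = a * q.eval u) (h' : n.derivative.eval u = a * q.derivative.eval u) :
    a ∈ criticalValues n q := by
  have hqu : q.eval u ≠ 0 := fun hq => hdisj u (by rw [h, hq, mul_zero]) hq
  refine ⟨u, eval_wronskian_eq_zero_of_pencil (a := a) one_ne_zero (c₂ := 1) ?_ ?_, ?_⟩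
  · simpa using h
  · simpa using h'
  · change n.eval u / q.eval u = a
    rw [h, mul_div_cancel_right₀ _ hqu]

theorem eval_ne_zero_of_pencil₂ (hdisj : ∀ w, n.eval w = 0 → q.eval w ≠ 0)
    (hsimple : ∀ w, n.eval w = 0 → n.derivative.eval w ≠ 0)
    (h : n.eval u * n.eval v = a * (q.eval u * q.eval v))
    (h' : n.derivative.eval v * n.eval u = a * (q.derivative.eval v * q.eval u)) :
    q.eval u ≠ 0 := by
  intro hq
  have hnu : n.eval u ≠ 0 := fun hn => hdisj u hn hq
  have hnv : n.eval v = 0 := by simpa [hq, hnu] using h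
  exact hsimple v hnv (by simpa [hq, hnu] using h')

theorem mem_criticalValues_mul_of_pencil₂ (hdisj : ∀ w, n.eval w = 0 → q.eval w ≠ 0)
    (hsimple : ∀ w, n.eval w = 0 → n.derivative.eval w ≠ 0) (ha : a ≠ 0)
    (h : n.eval u * n.eval v = a * (q.eval u * q.eval v))
    (hu : n.derivative.eval u * n.eval v = a * (q.derivative.eval u * q.eval v))
    (hv : n.derivative.eval v * n.eval u = a * (q.derivative.eval v * q.eval u)) :
    a ∈ criticalValues n q * criticalValues n q := by
  have h_symm : n.eval v * n.eval u = a * (q.eval v * q.eval u) := by linear_combination h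
  have hqu := eval_ne_zero_of_pencil₂ hdisj hsimple h hv
  have hqv := eval_ne_zero_of_pencil₂ hdisj hsimple h_symm hu
  have hnn : n.eval u * n.eval v ≠ 0 := by rw [h]; exact mul_ne_zero ha (mul_ne_zero hqu hqv)
  refine ⟨_, ⟨u, eval_wronskian_eq_zero_of_pencil (right_ne_zero_of_mul hnn) h hu, rfl⟩,
    _, ⟨v, eval_wronskian_eq_zero_of_pencil (left_ne_zero_of_mul hnn) h_symm hv, rfl⟩, ?_⟩
  change n.eval u / q.eval u * (n.eval v / q.eval v) = a
  rw [div_mul_div_comm, div_eq_iff (mul_ne_zero hqu hqv), h]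

end Pencil

end Polynomial

theorem two_mul_natCast_add_one_ne_zero (d : ℕ) : (2 * d + 1 : ℂ) ≠ 0 := by
  exact_mod_cast (2 * d).succ_ne_zero

theorem eval_R3 (d k : ℕ) (p : Fin 3 → ℂ) :
    eval p (R3 d k) = p 2 * k ^ 2 - (p 0 - p 1 + (2 * d + 1) * p 2) * k + (2 * d + 1) * p 0 := by
  simp only [R3, map_sub, map_add, map_mul, eval_C, eval_X]
  ring

theorem eval_prod_R3_of_vieta {d : ℕ} (S : Finset ℕ) {p : Fin 3 → ℂ} {u v : ℂ}
    (hsum : p 2 * (u + v) = p 0 - p 1 + (2 * d + 1) * p 2)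
    (hprod : p 2 * (u * v) = (2 * d + 1) * p 0) :
    eval p (∏ k ∈ S, R3 d k) =
      p 2 ^ S.card * ((Lagrange.nodal S Nat.cast).eval u * (Lagrange.nodal S Nat.cast).eval v) := by
  have hR : ∀ k : ℕ, eval p (R3 d k) = p 2 * ((u - k) * (v - k)) := fun k => by
    rw [eval_R3]
    linear_combination (k : ℂ) * hsum - hprod
  simp only [map_prod, hR, Finset.prod_mul_distrib, Finset.prod_const, Lagrange.eval_nodal]

theorem eval_prod_R3_of_eq_zero {d : ℕ} (S : Finset ℕ) {p : Fin 3 → ℂ} {u : ℂ} (hz : p 2 = 0)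
    (hu : (p 0 - p 1) * u = (2 * d + 1) * p 0) :
    eval p (∏ k ∈ S, R3 d k) = (p 0 - p 1) ^ S.card * (Lagrange.nodal S Nat.cast).eval u := by
  have hR : ∀ k : ℕ, eval p (R3 d k) = (p 0 - p 1) * (u - k) := fun k => by
    rw [eval_R3, hz]
    linear_combination -hu
  simp only [map_prod, hR, Finset.prod_mul_distrib, Finset.prod_const, Lagrange.eval_nodal]

noncomputable def nodalP (d : ℕ) : ℂ[X] :=
  Lagrange.nodal (Finset.range (d + 1)) Nat.cast

noncomputable def nodalQ (d : ℕ) : ℂ[X] :=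
  Lagrange.nodal (Finset.Icc (d + 1) (2 * d + 1)) Nat.cast

theorem card_Icc_succ_two_mul_add_one (d : ℕ) :
    (Finset.Icc (d + 1) (2 * d + 1)).card = d + 1 := by
  rw [Nat.card_Icc]
  omega

theorem eval_pencil_of_vieta {d : ℕ} (a : ℂ) {p : Fin 3 → ℂ} {u v : ℂ}
    (hsum : p 2 * (u + v) = p 0 - p 1 + (2 * d + 1) * p 2)
    (hprod : p 2 * (u * v) = (2 * d + 1) * p 0) :
    eval p (P3 d - C a * Q3 d) = p 2 ^ (d + 1) * ((nodalP d).eval u * (nodalP d).eval v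
      - a * ((nodalQ d).eval u * (nodalQ d).eval v)) := by
  rw [map_sub, map_mul, eval_C, P3, Q3, eval_prod_R3_of_vieta _ hsum hprod,
    eval_prod_R3_of_vieta _ hsum hprod, Finset.card_range, card_Icc_succ_two_mul_add_one,
    nodalP, nodalQ]
  ring

theorem eval_pencil_of_eq_zero {d : ℕ} (a : ℂ) {p : Fin 3 → ℂ} {u : ℂ} (hz : p 2 = 0)
    (hu : (p 0 - p 1) * u = (2 * d + 1) * p 0) :
    eval p (P3 d - C a * Q3 d) =
      (p 0 - p 1) ^ (d + 1) * ((nodalP d).eval u - a * (nodalQ d).eval u) := by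
  rw [map_sub, map_mul, eval_C, P3, Q3, eval_prod_R3_of_eq_zero _ hz hu,
    eval_prod_R3_of_eq_zero _ hz hu, Finset.card_range, card_Icc_succ_two_mul_add_one,
    nodalP, nodalQ]
  ring

theorem nodalQ_eval_ne_zero {d : ℕ} {w : ℂ} (h : (nodalP d).eval w = 0) :
    (nodalQ d).eval w ≠ 0 := by
  obtain ⟨i, hi, rfl⟩ := Lagrange.eval_nodal_eq_zero_iff.1 h
  refine Lagrange.eval_nodal_not_at_node fun j hj hij => ?_
  rw [Finset.mem_range] at hi
  rw [Finset.mem_Icc] at hj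
  have := Nat.cast_injective hij
  omega

theorem nodalP_derivative_eval_ne_zero {d : ℕ} {w : ℂ} (h : (nodalP d).eval w = 0) :
    (nodalP d).derivative.eval w ≠ 0 :=
  Lagrange.eval_derivative_nodal_ne_zero Nat.cast_injective.injOn h

theorem wronskian_nodalQ_nodalP_ne_zero (d : ℕ) :
    Polynomial.wronskian (nodalQ d) (nodalP d) ≠ 0 := by
  have hmem : d + 1 ∈ Finset.Icc (d + 1) (2 * d + 1) := Finset.mem_Icc.2 ⟨le_rfl, by omega⟩
  have hq : (nodalQ d).eval ((d + 1 : ℕ) : ℂ) = 0 := Lagrange.eval_nodal_at_node hmem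
  refine Polynomial.wronskian_ne_zero_of_eval hq
    (Lagrange.eval_derivative_nodal_ne_zero Nat.cast_injective.injOn hq) fun hn => ?_
  exact nodalQ_eval_ne_zero hn hq

section SingularPoints

variable {d : ℕ} {a : ℂ} {p : Fin 3 → ℂ}

theorem eq_one_of_eval_pencil_eq_zero (hx : p 0 ≠ 0) (hxy : p 0 = p 1) (hz : p 2 = 0)
    (hE : eval p (P3 d - C a * Q3 d) = 0) : a = 1 := by
  have hR : ∀ k, eval p (R3 d k) = (2 * d + 1) * p 0 := fun k => by
    rw [eval_R3, hz, hxy]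
    ring
  simp only [map_sub, map_mul, eval_C, P3, Q3, map_prod, hR, Finset.prod_const,
    Finset.card_range, card_Icc_succ_two_mul_add_one] at hE
  have hc : ((2 * d + 1) * p 0) ^ (d + 1) ≠ 0 :=
    pow_ne_zero _ (mul_ne_zero (two_mul_natCast_add_one_ne_zero d) hx)
  exact mul_right_cancel₀ hc (by linear_combination -hE)

theorem mem_criticalValues_of_singular_of_eq_zero (hxy : p 0 ≠ p 1) (hz : p 2 = 0)
    (hE : eval p (P3 d - C a * Q3 d) = 0)
    (hsing : ∀ i, eval p (pderiv i (P3 d - C a * Q3 d)) = 0) :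
    a ∈ Polynomial.criticalValues (nodalP d) (nodalQ d) := by
  have hN := two_mul_natCast_add_one_ne_zero d
  have hc : p 0 - p 1 ≠ 0 := sub_ne_zero.2 hxy
  set u := (2 * d + 1) * p 0 / (p 0 - p 1)
  have hu : (p 0 - p 1) * u = (2 * d + 1) * p 0 := mul_div_cancel₀ _ hc
  -- moving `x` and `y` together keeps `x - y` and shifts the root `u`
  let w : Fin 3 → ℂ := ![(p 0 - p 1) / (2 * d + 1), (p 0 - p 1) / (2 * d + 1), 0]
  have hline : ∀ t, eval (p + t • w) (P3 d - C a * Q3 d) =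
      (p 0 - p 1) ^ (d + 1) * (nodalP d - Polynomial.C a * nodalQ d).eval (u + t) := by
    intro t
    have hxy' : (p + t • w) 0 - (p + t • w) 1 = p 0 - p 1 := by simp [w]
    rw [eval_pencil_of_eq_zero a (u := u + t) (by simp [w, hz]), hxy']
    · simp
    · rw [hxy']
      simp only [w, Pi.add_apply, Pi.smul_apply, smul_eq_mul, Matrix.cons_val_zero]
      field_simp
      linear_combination hu
  have h' := MvPolynomial.eval_derivative_eq_zero_of_eval_line hsing w (pow_ne_zero _ hc) hline
  rw [eval_pencil_of_eq_zero a hz hu] at hE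
  refine Polynomial.mem_criticalValues_of_pencil (u := u) (fun _ => nodalQ_eval_ne_zero) ?_ ?_
  · linear_combination (mul_eq_zero.1 hE).resolve_left (pow_ne_zero _ hc)
  · simp only [Polynomial.derivative_sub, Polynomial.derivative_C_mul, Polynomial.eval_sub,
      Polynomial.eval_mul, Polynomial.eval_C] at h'
    linear_combination h'

theorem derivative_pencil_eq_of_singular (hz : p 2 ≠ 0) {u v : ℂ}
    (hsum : p 2 * (u + v) = p 0 - p 1 + (2 * d + 1) * p 2)
    (hprod : p 2 * (u * v) = (2 * d + 1) * p 0)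
    (hsing : ∀ i, eval p (pderiv i (P3 d - C a * Q3 d)) = 0) :
    (nodalP d).derivative.eval u * (nodalP d).eval v =
      a * ((nodalQ d).derivative.eval u * (nodalQ d).eval v) := by
  have hN := two_mul_natCast_add_one_ne_zero d
  -- the direction in which the root `u` moves and `v` stays fixed
  let w : Fin 3 → ℂ := ![v * p 2 / (2 * d + 1), v * p 2 / (2 * d + 1) - p 2, 0]
  let G : ℂ[X] := Polynomial.C ((nodalP d).eval v) * nodalP d
    - Polynomial.C (a * (nodalQ d).eval v) * nodalQ d
  have hline : ∀ t, eval (p + t • w) (P3 d - C a * Q3 d) = p 2 ^ (d + 1) * G.eval (u + t) := by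
    intro t
    have hz' : (p + t • w) 2 = p 2 := by simp [w]
    rw [eval_pencil_of_vieta a (u := u + t) (v := v), hz']
    · simp only [G, Polynomial.eval_sub, Polynomial.eval_mul, Polynomial.eval_C]
      ring
    · simp only [w, Pi.add_apply, Pi.smul_apply, smul_eq_mul, Matrix.cons_val_zero,
        Matrix.cons_val_one, Matrix.cons_val_two, Matrix.head_cons, Matrix.tail_cons]
      field_simp
      linear_combination (2 * (d : ℂ) + 1) * hsum
    · simp only [w, Pi.add_apply, Pi.smul_apply, smul_eq_mul, Matrix.cons_val_zero,
        Matrix.cons_val_two, Matrix.head_cons, Matrix.tail_cons]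
      field_simp
      linear_combination hprod
  have h' := MvPolynomial.eval_derivative_eq_zero_of_eval_line hsing w (pow_ne_zero _ hz) hline
  simp only [G, Polynomial.derivative_sub, Polynomial.derivative_C_mul, Polynomial.eval_sub,
    Polynomial.eval_mul, Polynomial.eval_C] at h'
  linear_combination h'

theorem mem_criticalValues_mul_of_singular (hz : p 2 ≠ 0) (ha : a ≠ 0)
    (hE : eval p (P3 d - C a * Q3 d) = 0)
    (hsing : ∀ i, eval p (pderiv i (P3 d - C a * Q3 d)) = 0) :
    a ∈ Polynomial.criticalValues (nodalP d) (nodalQ d) *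
      Polynomial.criticalValues (nodalP d) (nodalQ d) := by
  obtain ⟨u, v, hsum, hprod⟩ := IsAlgClosed.exists_mul_add_eq_and_mul_mul_eq
    (b := p 0 - p 1 + (2 * d + 1) * p 2) (c := (2 * d + 1) * p 0) hz
  rw [eval_pencil_of_vieta a hsum hprod] at hE
  refine Polynomial.mem_criticalValues_mul_of_pencil₂ (fun _ => nodalQ_eval_ne_zero)
    (fun _ => nodalP_derivative_eval_ne_zero) ha ?_
    (derivative_pencil_eq_of_singular hz hsum hprod hsing)
    (derivative_pencil_eq_of_singular hz (by linear_combination hsum)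
      (by linear_combination hprod) hsing)
  linear_combination (mul_eq_zero.1 hE).resolve_left (pow_ne_zero _ hz)

end SingularPoints

theorem stmt10_general (d : ℕ) :
    {a : ℂ | ∃ x y z : ℂ, ¬(x = 0 ∧ y = 0 ∧ z = 0) ∧
      eval ![x, y, z] (P3 d - C a * Q3 d) = 0 ∧
      eval ![x, y, z] (pderiv 0 (P3 d - C a * Q3 d)) = 0 ∧
      eval ![x, y, z] (pderiv 1 (P3 d - C a * Q3 d)) = 0 ∧
      eval ![x, y, z] (pderiv 2 (P3 d - C a * Q3 d)) = 0}.Finite := by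
  have hCV := Polynomial.criticalValues_finite (wronskian_nodalQ_nodalP_ne_zero d)
  refine (((Set.toFinite {0, 1}).union hCV).union (hCV.mul hCV)).subset ?_
  rintro a ⟨x, y, z, hne, hE, h0, h1, h2⟩
  have hsing : ∀ i, eval ![x, y, z] (pderiv i (P3 d - C a * Q3 d)) = 0
    | 0 => h0
    | 1 => h1
    | 2 => h2
  by_cases ha : a = 0
  · exact Or.inl (Or.inl (Or.inl ha))
  rcases eq_or_ne z 0 with hz | hz
  · rcases eq_or_ne x y with hxy | hxy
    · refine Or.inl (Or.inl (Or.inr ?_))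
      exact eq_one_of_eval_pencil_eq_zero (p := ![x, y, z])
        (fun hx => hne ⟨hx, hxy ▸ hx, hz⟩) hxy hz hE
    · exact Or.inl (Or.inr (mem_criticalValues_of_singular_of_eq_zero (p := ![x, y, z])
        hxy hz hE hsing))
  · exact Or.inr (mem_criticalValues_mul_of_singular (p := ![x, y, z]) hz ha hE hsing)

/-- The set of `a ∈ ℂ` for which the projective curve `{P - aQ = 0}` is singular
(i.e. `P - aQ` and all three partial derivatives have a common zero in `ℂ³ \ {0}`)
is finite; hence for all but finitely many `a` the curve is smooth. -/
theorem stmt10 (d : ℕ) (hd : 1 ≤ d) :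
    {a : ℂ | ∃ x y z : ℂ, ¬(x = 0 ∧ y = 0 ∧ z = 0) ∧
      eval ![x, y, z] (P3 d - C a * Q3 d) = 0 ∧
      eval ![x, y, z] (pderiv 0 (P3 d - C a * Q3 d)) = 0 ∧
      eval ![x, y, z] (pderiv 1 (P3 d - C a * Q3 d)) = 0 ∧
      eval ![x, y, z] (pderiv 2 (P3 d - C a * Q3 d)) = 0}.Finite :=
  stmt10_general d
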